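/- For every ρ ∈ Γ, the subspace S(ℓ1,ℓ2,ℓ3;ρ,Γ) = x^ρ·S(ℓ1,ℓ2,ℓ3;Γ) of W(ℓ1,ℓ2,ℓ3;Γ) is closed under the Lie bracket, i.e., it is a Lie subalgebra of W(ℓ1,ℓ2,ℓ3;Γ). -/

import Mathlib

open scoped BigOperators

namespace SXDiv

variable (F : Type*) [Field F] [CharZero F]
variable (l1 l2 l3 : ℕ) (Γ : AddSubgroup (Fin (l2 + l3) → F))

/-- The polynomial ring `F[t_1,...,t_{ℓ1+ℓ2}]`. -/
abbrev R : Type _ := MvPolynomial (Fin (l1 + l2)) F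

/-- The algebra `A(ℓ1,ℓ2,ℓ3;Γ)`: free `F[t]`-module with basis `{x^α : α ∈ Γ}`. -/
abbrev A : Type _ := AddMonoidAlgebra (R F l1 l2) Γ

/-- `x^α`. -/
noncomputable def xpow (α : Γ) : A F l1 l2 l3 Γ := AddMonoidAlgebra.single α 1

/-- `t_i`. -/
noncomputable def tvar (i : Fin (l1 + l2)) : A F l1 l2 l3 Γ :=
  AddMonoidAlgebra.single 0 (MvPolynomial.X i)

/-- `t^i x^α`. -/
noncomputable def xmon (α : Γ) (i : Fin (l1 + l2) →₀ ℕ) : A F l1 l2 l3 Γ :=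
  AddMonoidAlgebra.single α (MvPolynomial.monomial i 1)

/-- `∂_{t_i}`. -/
noncomputable def dt (i : Fin (l1 + l2)) : Module.End F (A F l1 l2 l3 Γ) :=
  (AddMonoidAlgebra.coeffLinearEquiv F).symm.toLinearMap ∘ₗ
    (Finsupp.mapRange.linearMap (MvPolynomial.pderiv i).toLinearMap :
      (Γ →₀ R F l1 l2) →ₗ[F] (Γ →₀ R F l1 l2)) ∘ₗ
    (AddMonoidAlgebra.coeffLinearEquiv F).toLinearMap

/-- `∂*_j`. -/
noncomputable def dstar (j : Fin (l2 + l3)) : Module.End F (A F l1 l2 l3 Γ) :=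
  (AddMonoidAlgebra.coeffLinearEquiv F).symm.toLinearMap ∘ₗ
    (Finsupp.lsum F fun α : Γ => ((α : Fin (l2 + l3) → F) j) • (Finsupp.lsingle α) :
      (Γ →₀ R F l1 l2) →ₗ[F] (Γ →₀ R F l1 l2)) ∘ₗ
    (AddMonoidAlgebra.coeffLinearEquiv F).toLinearMap

/-- `∂_i`, `1 ≤ i ≤ ℓ`. -/
noncomputable def part (i : Fin (l1 + l2 + l3)) : Module.End F (A F l1 l2 l3 Γ) :=
  if h : (i : ℕ) < l1 then dt F l1 l2 l3 Γ ⟨i, by omega⟩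
  else if h2 : (i : ℕ) < l1 + l2 then
    dstar F l1 l2 l3 Γ ⟨(i : ℕ) - l1, by omega⟩ + dt F l1 l2 l3 Γ ⟨(i : ℕ), h2⟩
  else dstar F l1 l2 l3 Γ ⟨(i : ℕ) - l1, by have := i.isLt; omega⟩

/-- The vector field `Σ_i u_i ∂_i` determined by the coefficient vector `u`. -/
noncomputable def act : (Fin (l1 + l2 + l3) → A F l1 l2 l3 Γ) →ₗ[F]
    Module.End F (A F l1 l2 l3 Γ) :=
  ∑ i : Fin (l1 + l2 + l3),
    ((LinearMap.llcomp F _ _ _).flip (part F l1 l2 l3 Γ i)) ∘ₗ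
      (LinearMap.mul F (A F l1 l2 l3 Γ)) ∘ₗ (LinearMap.proj i)

/-- The divergence `div (Σ_i u_i ∂_i) = Σ_i ∂_i(u_i)`. -/
noncomputable def divg : (Fin (l1 + l2 + l3) → A F l1 l2 l3 Γ) →ₗ[F] A F l1 l2 l3 Γ :=
  ∑ i : Fin (l1 + l2 + l3), (part F l1 l2 l3 Γ i) ∘ₗ (LinearMap.proj i)

/-- Componentwise multiplication of a coefficient vector by `x^ρ`. -/
noncomputable def xscale (ρ : Γ) : (Fin (l1 + l2 + l3) → A F l1 l2 l3 Γ) →ₗ[F]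
    (Fin (l1 + l2 + l3) → A F l1 l2 l3 Γ) :=
  LinearMap.pi fun i => (LinearMap.mul F (A F l1 l2 l3 Γ) (xpow F l1 l2 l3 Γ ρ)) ∘ₗ
    (LinearMap.proj i)

/-- `S(ℓ1,ℓ2,ℓ3;ρ,Γ) = x^ρ·{∂ ∈ W : div ∂ = 0}` as a subspace of `End_F(A)`. -/
noncomputable def Ssub (ρ : Γ) : Submodule F (Module.End F (A F l1 l2 l3 Γ)) :=
  Submodule.map ((act F l1 l2 l3 Γ) ∘ₗ (xscale F l1 l2 l3 Γ ρ))
    (LinearMap.ker (divg F l1 l2 l3 Γ))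

/-- `D_{p,q}(u) = x^ρ(∂_q(x^{-ρ}u)∂_p − ∂_p(x^{-ρ}u)∂_q)`. -/
noncomputable def Dpq (ρ : Γ) (p q : Fin (l1 + l2 + l3)) (u : A F l1 l2 l3 Γ) :
    Module.End F (A F l1 l2 l3 Γ) :=
  act F l1 l2 l3 Γ
    (Pi.single p (xpow F l1 l2 l3 Γ ρ * (part F l1 l2 l3 Γ q (xpow F l1 l2 l3 Γ (-ρ) * u)))
     - Pi.single q (xpow F l1 l2 l3 Γ ρ * (part F l1 l2 l3 Γ p (xpow F l1 l2 l3 Γ (-ρ) * u))))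

/-- The homogeneous component `S_α`. -/
noncomputable def Sgr (ρ : Γ) (α : Γ) : Submodule F (Module.End F (A F l1 l2 l3 Γ)) :=
  Submodule.span F {E | ∃ (p q : Fin (l1 + l2 + l3)) (i : Fin (l1 + l2) →₀ ℕ),
    E = Dpq F l1 l2 l3 Γ ρ p q (xmon F l1 l2 l3 Γ α i)}


end SXDiv

/-!
Write `∂_U = Σ U_j ∂_j` for the vector field with coefficient vector `U`. Because the `∂_j` are
pairwise commuting derivations, `[∂_U, ∂_V] = ∂_W` with `W_j = ∂_U(V_j) - ∂_V(U_j)`, and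
`div W = ∂_U(div V) - ∂_V(div U)`. The monomial `x^ρ` is a unit with `∂_j x^ρ = c_j x^ρ` for
constants `c_j`, so `x^ρ u` with `div u = 0` are exactly the `U` with `div U = Σ c_j U_j`. Since
`∂_U` is `F`-linear, the divergence formula shows that this linear condition passes from `U` and `V`
to `W`.
-/

namespace MvPolynomial

theorem pderiv_pderiv_comm {R σ : Type*} [CommRing R] (i j : σ) (f : MvPolynomial σ R) :
    pderiv i (pderiv j f) = pderiv j (pderiv i f) := by
  classical
  suffices ⁅pderiv (R := R) i, pderiv (R := R) j⁆ = 0 by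
    rw [← sub_eq_zero, ← Derivation.commutator_apply, this, Derivation.zero_apply]
  refine derivation_ext fun k => ?_
  simp only [Derivation.commutator_apply, pderiv_X, Pi.single_apply]
  split_ifs <;> simp

end MvPolynomial

namespace AddMonoidAlgebra

theorem commute_of_single {K S G : Type*} [CommSemiring K] [Semiring S] [Module K S]
    {D E : Module.End K (AddMonoidAlgebra S G)}
    (h : ∀ (α : G) (f : S), D (E (single α f)) = E (D (single α f))) : Commute D E :=
  lhom_ext' fun α => LinearMap.ext fun f => h α f

noncomputable def derivationOfLeibnizSingle {K S G : Type*} [CommSemiring K] [CommRing S]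
    [Algebra K S] [AddCommMonoid G] (D : AddMonoidAlgebra S G →ₗ[K] AddMonoidAlgebra S G)
    (h : ∀ (α β : G) (f g : S),
      D (single α f * single β g) = single α f * D (single β g) + single β g * D (single α f)) :
    Derivation K (AddMonoidAlgebra S G) (AddMonoidAlgebra S G) :=
  Derivation.mk' D fun a b => by
    simp only [smul_eq_mul]
    induction a using AddMonoidAlgebra.induction_linear with
    | zero => simp
    | add a₁ a₂ h₁ h₂ => simp only [add_mul, mul_add, map_add, h₁, h₂]; abel
    | single α f =>
      induction b using AddMonoidAlgebra.induction_linear with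
      | zero => simp
      | add b₁ b₂ h₁ h₂ => simp only [add_mul, mul_add, map_add, h₁, h₂]; abel
      | single β g => exact h α β f g

end AddMonoidAlgebra

namespace SXDiv

section VectorField

variable {K A ι : Type*} [CommRing K] [CommRing A] [Algebra K A] [Fintype ι]
  (D : ι → Derivation K A A)

def vectorField (u : ι → A) : Derivation K A A := ∑ i, u i • D i

def divergence (u : ι → A) : A := ∑ i, D i (u i)

def lieCoeff (u v : ι → A) : ι → A := fun j => vectorField D u (v j) - vectorField D v (u j)

theorem vectorField_apply (u : ι → A) (a : A) : vectorField D u a = ∑ i, u i * D i a := by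
  simp only [vectorField, ← Derivation.coeFnAddMonoidHom_apply, map_sum, Finset.sum_apply]
  rfl

theorem vectorField_vectorField_apply (u v : ι → A) (a : A) :
    vectorField D u (vectorField D v a)
      = ∑ i, ∑ j, u i * D i (v j) * D j a + ∑ i, ∑ j, u i * v j * D i (D j a) := by
  rw [vectorField_apply, vectorField_apply, ← Finset.sum_add_distrib]
  refine Finset.sum_congr rfl fun i _ => ?_
  rw [map_sum, Finset.mul_sum, ← Finset.sum_add_distrib]
  refine Finset.sum_congr rfl fun j _ => ?_
  rw [Derivation.leibniz, smul_eq_mul, smul_eq_mul]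
  ring

variable {D}

theorem vectorField_lie_vectorField (hD : ∀ i j a, D i (D j a) = D j (D i a)) (u v : ι → A) :
    ⁅vectorField D u, vectorField D v⁆ = vectorField D (lieCoeff D u v) := by
  ext a
  have second_order_symm : ∑ i, ∑ j, u i * v j * D i (D j a)
      = ∑ i, ∑ j, v i * u j * D i (D j a) := by
    rw [Finset.sum_comm]
    refine Finset.sum_congr rfl fun i _ => Finset.sum_congr rfl fun j _ => ?_
    rw [hD]
    ring
  rw [Derivation.commutator_apply, vectorField_vectorField_apply,
    vectorField_vectorField_apply, second_order_symm, add_sub_add_right_eq_sub,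
    vectorField_apply]
  simp only [lieCoeff, vectorField_apply, sub_mul, Finset.sum_mul, Finset.sum_sub_distrib]
  congr 1 <;> exact Finset.sum_comm

theorem divergence_lieCoeff (hD : ∀ i j a, D i (D j a) = D j (D i a)) (u v : ι → A) :
    divergence D (lieCoeff D u v)
      = vectorField D u (divergence D v) - vectorField D v (divergence D u) := by
  have expand : ∀ u v : ι → A, ∑ j, D j (vectorField D u (v j))
      = ∑ j, ∑ i, D j (u i) * D i (v j) + vectorField D u (divergence D v) := by
    intro u v
    simp only [divergence, vectorField_apply, map_sum, Derivation.leibniz, smul_eq_mul,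
      Finset.sum_add_distrib]
    rw [add_comm]
    congr 1
    · exact Finset.sum_congr rfl fun j _ => Finset.sum_congr rfl fun i _ => mul_comm _ _
    · exact Finset.sum_congr rfl fun j _ => Finset.sum_congr rfl fun i _ => by
        rw [hD]
  have first_order_symm :
      ∑ j, ∑ i, D j (u i) * D i (v j) = ∑ j, ∑ i, D j (v i) * D i (u j) := by
    rw [Finset.sum_comm]
    simp only [mul_comm]
  change ∑ j, D j (lieCoeff D u v j) = _
  simp only [lieCoeff, map_sub, Finset.sum_sub_distrib]
  rw [expand, expand, first_order_symm, add_sub_add_left_eq_sub]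

theorem divergence_lieCoeff_of_divergence_eq_sum_smul (hD : ∀ i j a, D i (D j a) = D j (D i a))
    (c : ι → K) {u v : ι → A} (hu : divergence D u = ∑ i, c i • u i)
    (hv : divergence D v = ∑ i, c i • v i) :
    divergence D (lieCoeff D u v) = ∑ i, c i • lieCoeff D u v i := by
  simp only [divergence_lieCoeff hD, hu, hv, map_sum, Derivation.map_smul, lieCoeff, smul_sub,
    Finset.sum_sub_distrib]

theorem divergence_mul_left (x : A) (c : ι → K) (hx : ∀ i, D i x = c i • x) (u : ι → A) :
    divergence D (fun i => x * u i) = x * divergence D u + ∑ i, c i • (x * u i) := by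
  simp only [divergence, Derivation.leibniz, hx, smul_eq_mul, Finset.mul_sum,
    ← Finset.sum_add_distrib]
  refine Finset.sum_congr rfl fun i _ => ?_
  rw [mul_smul_comm, mul_comm (u i)]

theorem divergence_units_mul_eq_sum_smul_iff (x : Aˣ) (c : ι → K)
    (hx : ∀ i, D i x = c i • (x : A)) (u : ι → A) :
    divergence D (fun i => x * u i) = ∑ i, c i • (x * u i) ↔ divergence D u = 0 := by
  rw [divergence_mul_left (x : A) c hx, add_eq_right, Units.mul_right_eq_zero]

end VectorField

section

variable (F : Type*) [Field F] (l1 l2 l3 : ℕ) (Γ : AddSubgroup (Fin (l2 + l3) → F))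

local notation "𝔸" => A F l1 l2 l3 Γ

open AddMonoidAlgebra

theorem dt_single (i : Fin (l1 + l2)) (α : Γ) (f : R F l1 l2) :
    dt F l1 l2 l3 Γ i (single α f) = single α (MvPolynomial.pderiv i f) :=
  congrArg ofCoeff (Finsupp.mapRange_single (hf := map_zero (MvPolynomial.pderiv i)))

theorem dstar_single (j : Fin (l2 + l3)) (α : Γ) (f : R F l1 l2) :
    dstar F l1 l2 l3 Γ j (single α f) = (α : Fin (l2 + l3) → F) j • single α f := by
  change ofCoeff (Finsupp.lsum F (fun α : Γ => (α : Fin (l2 + l3) → F) j •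
    Finsupp.lsingle (R := F) (M := R F l1 l2) α) (Finsupp.single α f)) = _
  rw [Finsupp.lsum_single]
  rfl

noncomputable def dtDerivation (i : Fin (l1 + l2)) : Derivation F 𝔸 𝔸 :=
  derivationOfLeibnizSingle (dt F l1 l2 l3 Γ i) fun α β f g => by
    simp only [single_mul_single, dt_single, MvPolynomial.pderiv_mul, ← single_add,
      add_comm β α]
    congr 1
    ring

noncomputable def dstarDerivation (j : Fin (l2 + l3)) : Derivation F 𝔸 𝔸 :=
  derivationOfLeibnizSingle (dstar F l1 l2 l3 Γ j) fun α β f g => by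
    simp only [single_mul_single, dstar_single, mul_smul_comm, AddSubgroup.coe_add, Pi.add_apply,
      add_smul, add_comm β α, mul_comm g]
    exact add_comm _ _

noncomputable def partDerivation (i : Fin (l1 + l2 + l3)) : Derivation F 𝔸 𝔸 :=
  if h : (i : ℕ) < l1 then dtDerivation F l1 l2 l3 Γ ⟨i, by omega⟩
  else if h2 : (i : ℕ) < l1 + l2 then
    dstarDerivation F l1 l2 l3 Γ ⟨(i : ℕ) - l1, by omega⟩ + dtDerivation F l1 l2 l3 Γ ⟨i, h2⟩
  else dstarDerivation F l1 l2 l3 Γ ⟨(i : ℕ) - l1, by have := i.isLt; omega⟩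

variable {F l1 l2 l3 Γ}

theorem partDerivation_apply (i : Fin (l1 + l2 + l3)) (a : 𝔸) :
    partDerivation F l1 l2 l3 Γ i a = part F l1 l2 l3 Γ i a := by
  unfold partDerivation part
  split_ifs <;> rfl

theorem commute_dt_dt (i j : Fin (l1 + l2)) :
    Commute (dt F l1 l2 l3 Γ i) (dt F l1 l2 l3 Γ j) :=
  commute_of_single fun α f => by
    rw [dt_single, dt_single, dt_single, dt_single, MvPolynomial.pderiv_pderiv_comm]

theorem commute_dstar_dstar (j k : Fin (l2 + l3)) :
    Commute (dstar F l1 l2 l3 Γ j) (dstar F l1 l2 l3 Γ k) :=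
  commute_of_single fun α f => by simp only [dstar_single, map_smul, smul_comm ((α : _ → F) j)]

theorem commute_dt_dstar (i : Fin (l1 + l2)) (k : Fin (l2 + l3)) :
    Commute (dt F l1 l2 l3 Γ i) (dstar F l1 l2 l3 Γ k) :=
  commute_of_single fun α f => by simp only [dstar_single, dt_single, map_smul]

theorem commute_dstar_dt (k : Fin (l2 + l3)) (i : Fin (l1 + l2)) :
    Commute (dstar F l1 l2 l3 Γ k) (dt F l1 l2 l3 Γ i) :=
  (commute_dt_dstar i k).symm

theorem commute_part_part (i j : Fin (l1 + l2 + l3)) :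
    Commute (part F l1 l2 l3 Γ i) (part F l1 l2 l3 Γ j) := by
  unfold part
  -- at reducible transparency the failing alternatives do not unfold `dt` and `dstar`
  split_ifs <;>
    with_reducible repeat first
      | exact commute_dt_dt _ _ | exact commute_dstar_dstar _ _
      | exact commute_dt_dstar _ _ | exact commute_dstar_dt _ _
      | refine .add_left ?_ ?_ | refine .add_right ?_ ?_

theorem partDerivation_comm (i j : Fin (l1 + l2 + l3)) (a : 𝔸) :
    partDerivation F l1 l2 l3 Γ i (partDerivation F l1 l2 l3 Γ j a)
      = partDerivation F l1 l2 l3 Γ j (partDerivation F l1 l2 l3 Γ i a) := by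
  simp only [partDerivation_apply]
  exact LinearMap.congr_fun (commute_part_part i j) a

variable (F l1 l2 l3 Γ) in
def weight (j : Fin (l1 + l2 + l3)) : Γ →+ F :=
  if h : (j : ℕ) < l1 then 0
  else (Pi.evalAddMonoidHom (fun _ => F) ⟨(j : ℕ) - l1, by have := j.isLt; omega⟩).comp Γ.subtype

theorem part_xpow (j : Fin (l1 + l2 + l3)) (α : Γ) :
    part F l1 l2 l3 Γ j (xpow F l1 l2 l3 Γ α)
      = weight F l1 l2 l3 Γ j α • xpow F l1 l2 l3 Γ α := by
  unfold part weight xpow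
  split_ifs <;> simp [dt_single, dstar_single]

variable (F l1 l2 l3 Γ) in
noncomputable def xpowUnit (ρ : Γ) : 𝔸ˣ where
  val := xpow F l1 l2 l3 Γ ρ
  inv := xpow F l1 l2 l3 Γ (-ρ)
  val_inv := by rw [xpow, xpow, single_mul_single, add_neg_cancel, mul_one, ← one_def]
  inv_val := by rw [xpow, xpow, single_mul_single, neg_add_cancel, mul_one, ← one_def]

theorem act_eq_vectorField (u : Fin (l1 + l2 + l3) → 𝔸) :
    act F l1 l2 l3 Γ u = (vectorField (partDerivation F l1 l2 l3 Γ) u : Module.End F 𝔸) := by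
  refine LinearMap.ext fun a => ?_
  simp only [act, LinearMap.coe_sum, Finset.sum_apply, LinearMap.comp_apply,
    LinearMap.proj_apply, LinearMap.flip_apply, LinearMap.llcomp_apply, LinearMap.mul_apply',
    Derivation.coeFn_coe, vectorField_apply, partDerivation_apply]

theorem divg_eq_divergence (u : Fin (l1 + l2 + l3) → 𝔸) :
    divg F l1 l2 l3 Γ u = divergence (partDerivation F l1 l2 l3 Γ) u := by
  simp only [divg, divergence, partDerivation_apply, LinearMap.coe_sum, Finset.sum_apply,
    LinearMap.comp_apply, LinearMap.proj_apply]

theorem xscale_apply (ρ : Γ) (u : Fin (l1 + l2 + l3) → 𝔸) :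
    xscale F l1 l2 l3 Γ ρ u = fun i => (xpowUnit F l1 l2 l3 Γ ρ : 𝔸) * u i :=
  rfl

theorem mem_Ssub_iff (ρ : Γ) (X : Module.End F 𝔸) :
    X ∈ Ssub F l1 l2 l3 Γ ρ ↔ ∃ U : Fin (l1 + l2 + l3) → 𝔸,
      divergence (partDerivation F l1 l2 l3 Γ) U = ∑ i, weight F l1 l2 l3 Γ i ρ • U i ∧
        (vectorField (partDerivation F l1 l2 l3 Γ) U : Module.End F 𝔸) = X := by
  have hx (i : Fin (l1 + l2 + l3)) : partDerivation F l1 l2 l3 Γ i (xpowUnit F l1 l2 l3 Γ ρ)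
      = weight F l1 l2 l3 Γ i ρ • (xpowUnit F l1 l2 l3 Γ ρ : 𝔸) := by
    rw [partDerivation_apply]
    exact part_xpow i ρ
  simp only [Ssub, Submodule.mem_map, LinearMap.mem_ker, LinearMap.comp_apply,
    divg_eq_divergence, act_eq_vectorField, xscale_apply]
  constructor
  · rintro ⟨u, hu, rfl⟩
    exact ⟨_, (divergence_units_mul_eq_sum_smul_iff (xpowUnit F l1 l2 l3 Γ ρ) _ hx u).2 hu, rfl⟩
  · rintro ⟨U, hU, rfl⟩
    refine ⟨fun i => ↑(xpowUnit F l1 l2 l3 Γ ρ)⁻¹ * U i,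
      (divergence_units_mul_eq_sum_smul_iff (xpowUnit F l1 l2 l3 Γ ρ) _ hx _).1 ?_, ?_⟩
    · simpa only [Units.mul_inv_cancel_left] using hU
    · simp only [Units.mul_inv_cancel_left]

end

theorem divergenceFree_closed_under_bracket_general
    (F : Type*) [Field F]
    (l1 l2 l3 : ℕ)
    (Γ : AddSubgroup (Fin (l2 + l3) → F))
    (ρ : Γ) :
    ∀ X ∈ Ssub F l1 l2 l3 Γ ρ, ∀ Y ∈ Ssub F l1 l2 l3 Γ ρ,
      ⁅X, Y⁆ ∈ Ssub F l1 l2 l3 Γ ρ := by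
  intro X hX Y hY
  rw [mem_Ssub_iff] at hX hY ⊢
  obtain ⟨U, hU, rfl⟩ := hX
  obtain ⟨V, hV, rfl⟩ := hY
  refine ⟨lieCoeff (partDerivation F l1 l2 l3 Γ) U V, ?_, ?_⟩
  · exact divergence_lieCoeff_of_divergence_eq_sum_smul partDerivation_comm _ hU hV
  · rw [← vectorField_lie_vectorField partDerivation_comm]
    rfl

theorem divergenceFree_closed_under_bracket
    (F : Type*) [Field F] [CharZero F]
    (l1 l2 l3 : ℕ) (hl : 0 < l1 + l2 + l3)
    (Γ : AddSubgroup (Fin (l2 + l3) → F))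
    (hΓ : Submodule.span F (Γ : Set (Fin (l2 + l3) → F)) = ⊤)
    (ρ : Γ) :
    ∀ X ∈ Ssub F l1 l2 l3 Γ ρ, ∀ Y ∈ Ssub F l1 l2 l3 Γ ρ,
      ⁅X, Y⁆ ∈ Ssub F l1 l2 l3 Γ ρ :=
  divergenceFree_closed_under_bracket_general F l1 l2 l3 Γ ρ

end SXDiv
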